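/- arXiv:2109.05274 — 3 statements merged into one kernel-verified Lean document; each statement's English description precedes it below -/
import Mathlib

section
/- A k-regular graph of girth 5 and diameter 2 (k ≥ 3) has exactly 3 distinct distance eigenvalues. -/
/-!
Girth 5 rules out triangles and 4-cycles, and diameter 2 gives every non-adjacent pair a common
neighbour, so `G` is strongly regular with parameters `(n, k, 0, 1)`: `A² = (k - 1) I - A + J`.
As `D = 2 (J - I) - A`, this gives `(D - μ₁)(D - μ₂) = (4n - 4k - 1) J` for the roots
`μ₁, μ₂ = (-3 ∓ √(4k - 3)) / 2` of `x² + 3x + 3 - k`, while `D J = μ₀ J` with `μ₀ = 2n - 2 - k`.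
So `(x - μ₀)(x - μ₁)(x - μ₂)` annihilates `D`, and no product of two of its factors does, because
`I`, `A` and `J` are linearly independent; hence the spectrum of `D` is exactly `{μ₀, μ₁, μ₂}`.
-/

open Matrix

/-- The distance matrix of a graph, with real entries. -/
noncomputable def distMatrix {V : Type*} [Fintype V] (G : SimpleGraph V) : Matrix V V ℝ :=
  fun u v => (G.dist u v : ℝ)

open Polynomial

theorem spectrum_eq_of_aeval_prod_eq_zero {𝕜 A : Type*} [Field 𝕜] [DecidableEq 𝕜] [Ring A]
    [Algebra 𝕜 A] [Nontrivial A] {a : A} {s : Finset 𝕜} (h : aeval a (∏ μ ∈ s, (X - C μ)) = 0)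
    (hs : ∀ μ ∈ s, aeval a (∏ ν ∈ s.erase μ, (X - C ν)) ≠ 0) :
    spectrum 𝕜 a = s := by
  ext μ
  refine ⟨fun hμ ↦ ?_, fun hμ ↦ ?_⟩
  · have : eval μ (∏ ν ∈ s, (X - C ν)) ∈ spectrum 𝕜 (aeval a (∏ ν ∈ s, (X - C ν))) :=
      spectrum.subset_polynomial_aeval a _ ⟨μ, hμ, rfl⟩
    rw [h, spectrum.zero_eq, Set.mem_singleton_iff, eval_prod, Finset.prod_eq_zero_iff] at this
    obtain ⟨ν, hν, hμν⟩ := this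
    rw [eval_sub, eval_X, eval_C, sub_eq_zero] at hμν
    rwa [Finset.mem_coe, hμν]
  · rw [spectrum.mem_iff, ← IsUnit.neg_iff, neg_sub]
    intro hunit
    apply hs μ hμ
    rw [← hunit.mul_right_eq_zero, ← h, ← Finset.mul_prod_erase s _ hμ, map_mul]
    simp [Algebra.algebraMap_eq_smul_one]

theorem neg_three_sub_sqrt_lt_neg_three_add_sqrt_lt {k n : ℕ} (hk : 1 ≤ k) (hkn : k < n) :
    (-3 - √(4 * k - 3)) / 2 < (-3 + √(4 * k - 3)) / 2 ∧
      (-3 + √(4 * k - 3)) / 2 < 2 * n - 2 - (k : ℝ) := by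
  have hk : (1 : ℝ) ≤ k := by exact_mod_cast hk
  have hkn : (k : ℝ) + 1 ≤ n := by exact_mod_cast hkn
  have hs : √(4 * k - 3) ^ 2 = 4 * k - 3 := Real.sq_sqrt (by linarith)
  have hs0 : 0 < √(4 * k - 3) := Real.sqrt_pos.mpr (by linarith)
  constructor <;> nlinarith

theorem Matrix.of_one_mul_of_one {n α : Type*} [Fintype n] [NonAssocSemiring α] :
    (of 1 : Matrix n n α) * of 1 = (Fintype.card n : α) • of 1 := by
  ext i j
  simp [mul_apply]

namespace SimpleGraph

variable {V α : Type*} {G : SimpleGraph V} {u v : V}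

theorem commonNeighbors_eq_empty_of_four_le_egirth (hg : 4 ≤ G.egirth) (h : G.Adj u v) :
    G.commonNeighbors u v = ∅ := by
  refine Set.eq_empty_of_forall_notMem fun w hw ↦ ?_
  obtain ⟨huw, hvw⟩ := G.mem_commonNeighbors.mp hw
  have hcycle : (Walk.cons h (.cons hvw (.cons huw.symm .nil))).IsCycle := by
    have := h.ne; have := hvw.ne; have := huw.ne
    rw [Walk.isCycle_def, Walk.isTrail_def]
    refine ⟨?_, by simp, ?_⟩ <;> simp <;> tauto
  exact absurd (hg.trans (egirth_le_length hcycle)) (by norm_num)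

theorem commonNeighbors_subsingleton_of_five_le_egirth (hg : 5 ≤ G.egirth) (h : u ≠ v) :
    (G.commonNeighbors u v).Subsingleton := by
  intro w hw w' hw'
  by_contra hww'
  obtain ⟨huw, hvw⟩ := G.mem_commonNeighbors.mp hw
  obtain ⟨huw', hvw'⟩ := G.mem_commonNeighbors.mp hw'
  have hcycle : (Walk.cons huw (.cons hvw.symm (.cons hvw' (.cons huw'.symm .nil)))).IsCycle := by
    have := huw.ne; have := hvw.ne; have := huw'.ne; have := hvw'.ne
    rw [Walk.isCycle_def, Walk.isTrail_def]
    refine ⟨?_, by simp, ?_⟩ <;> simp <;> tauto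
  exact absurd (hg.trans (egirth_le_length hcycle)) (by norm_num)

theorem edist_eq_two_of_ediam_le_two (hd : G.ediam ≤ 2) (hne : u ≠ v) (hadj : ¬G.Adj u v) :
    G.edist u v = 2 := by
  refine edist_eq_two_iff.mpr ⟨hne, hadj, Set.nonempty_iff_ne_empty.mpr fun hempty ↦ ?_⟩
  exact (edist_le_ediam.trans hd).not_gt (two_lt_edist_iff.mpr ⟨hne, hadj, hempty⟩)

variable [DecidableRel G.Adj] {k : ℕ}

theorem smul_of_one_add_smul_adjMatrix_add_smul_one_eq_zero_iff [DecidableEq V] [Ring α]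
    (hbot : G ≠ ⊥) (htop : G ≠ ⊤) {x y z : α} :
    x • of 1 + y • G.adjMatrix α + z • 1 = 0 ↔ x = 0 ∧ y = 0 ∧ z = 0 := by
  refine ⟨fun h ↦ ?_, by rintro ⟨rfl, rfl, rfl⟩; simp⟩
  obtain ⟨u, w, hadj⟩ := ne_bot_iff_exists_adj.mp hbot
  obtain ⟨v, v', hne, hnadj⟩ := ne_top_iff_exists_not_adj.mp htop
  have hdiag := congrFun₂ h u u
  have hedge := congrFun₂ h u w
  have hnonedge := congrFun₂ h v v'
  simp [hadj, hadj.ne, hne, hnadj] at hdiag hedge hnonedge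
  rw [hnonedge, zero_add] at hdiag hedge
  exact ⟨hnonedge, hedge, hdiag⟩

variable [Fintype V]

theorem IsRegularOfDegree.isSRGWith_of_five_le_egirth_of_ediam_le_two
    (hreg : G.IsRegularOfDegree k) (hg : 5 ≤ G.egirth) (hd : G.ediam ≤ 2) :
    G.IsSRGWith (Fintype.card V) k 0 1 where
  card := rfl
  regular := hreg
  of_adj u v h := by
    simp [commonNeighbors_eq_empty_of_four_le_egirth (le_trans (by norm_num) hg) h]
  of_not_adj u v hne hadj := by
    obtain ⟨w, hw⟩ := (edist_eq_two_iff.mp (edist_eq_two_of_ediam_le_two hd hne hadj)).2.2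
    exact Fintype.card_eq_one_iff.mpr ⟨⟨w, hw⟩, fun ⟨w', hw'⟩ ↦
      Subtype.ext (commonNeighbors_subsingleton_of_five_le_egirth hg hne hw' hw)⟩

theorem IsRegularOfDegree.adjMatrix_mul_of_one [NonAssocSemiring α]
    (h : G.IsRegularOfDegree k) : G.adjMatrix α * of 1 = (k : α) • of 1 := by
  ext u v
  simp [adjMatrix_mul_apply, h u]

theorem IsRegularOfDegree.of_one_mul_adjMatrix [NonAssocSemiring α]
    (h : G.IsRegularOfDegree k) : of 1 * G.adjMatrix α = (k : α) • of 1 := by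
  ext u v
  simp [mul_adjMatrix_apply, h v]

theorem IsSRGWith.adjMatrix_mul_self [DecidableEq V] [CommRing α] [DecidableEq α] {n : ℕ}
    (h : G.IsSRGWith n k 0 1) :
    G.adjMatrix α * G.adjMatrix α = ((k : α) - 1) • 1 - G.adjMatrix α + of 1 := by
  rw [← sq, h.matrix_eq, ← compl_adjMatrix_eq_adjMatrix_compl,
    ← G.one_add_adjMatrix_add_compl_adjMatrix_eq_of_one α]
  module

theorem distMatrix_eq_of_ediam_le_two [DecidableEq V] (hd : G.ediam ≤ 2) :
    distMatrix G = (2 : ℝ) • (of 1 - 1) - G.adjMatrix ℝ := by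
  ext u v
  simp only [distMatrix, Matrix.sub_apply, Matrix.smul_apply, of_apply, one_apply,
    adjMatrix_apply, smul_eq_mul]
  rcases eq_or_ne u v with rfl | hne
  · simp
  by_cases hadj : G.Adj u v
  · simp [hne, hadj, dist_eq_one_iff_adj.mpr hadj]
    norm_num
  · simp [hne, hadj, dist, edist_eq_two_of_ediam_le_two hd hne hadj]

theorem IsRegularOfDegree.distMatrix_mul_of_one [DecidableEq V] (h : G.IsRegularOfDegree k)
    (hd : G.ediam ≤ 2) :
    distMatrix G * of 1 = (2 * Fintype.card V - 2 - k : ℝ) • of 1 := by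
  rw [distMatrix_eq_of_ediam_le_two hd]
  simp only [sub_mul, Matrix.smul_mul, Matrix.one_mul, of_one_mul_of_one, h.adjMatrix_mul_of_one]
  module

theorem IsSRGWith.distMatrix_sub_mul_distMatrix_sub [DecidableEq V]
    (h : G.IsSRGWith (Fintype.card V) k 0 1) (hd : G.ediam ≤ 2) (a b : ℝ) :
    (distMatrix G - a • 1) * (distMatrix G - b • 1) =
      (4 * Fintype.card V - 4 * k - 7 - 2 * (a + b) : ℝ) • of 1 + (3 + a + b) • G.adjMatrix ℝ +
        (k + 3 + 2 * (a + b) + a * b) • 1 := by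
  rw [distMatrix_eq_of_ediam_le_two hd]
  simp only [sub_mul, mul_sub, Matrix.smul_mul, Matrix.mul_smul, Matrix.one_mul, Matrix.mul_one,
    of_one_mul_of_one, h.regular.adjMatrix_mul_of_one, h.regular.of_one_mul_adjMatrix,
    h.adjMatrix_mul_self]
  module

theorem IsRegularOfDegree.lt_card [Nonempty V] (h : G.IsRegularOfDegree k) :
    k < Fintype.card V :=
  h.degree_eq (Classical.arbitrary V) ▸ G.degree_lt_card_verts _

theorem IsRegularOfDegree.ne_bot [Nonempty V] (h : G.IsRegularOfDegree k) (hk : k ≠ 0) :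
    G ≠ ⊥ := by
  obtain ⟨v⟩ := ‹Nonempty V›
  obtain ⟨w, hw⟩ := (G.degree_pos_iff_exists_adj v).mp (h.degree_eq v ▸ Nat.pos_of_ne_zero hk)
  exact ne_bot_iff_exists_adj.mpr ⟨v, w, hw⟩

theorem IsSRGWith.distMatrix_sub_mul_distMatrix_sub_ne_zero [DecidableEq V]
    (h : G.IsSRGWith (Fintype.card V) k 0 1) (hbot : G ≠ ⊥) (htop : G ≠ ⊤) (hd : G.ediam ≤ 2)
    {a b : ℝ} (hab : 4 * Fintype.card V - 4 * k - 7 - 2 * (a + b) ≠ 0 ∨ 3 + a + b ≠ 0) :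
    (distMatrix G - a • 1) * (distMatrix G - b • 1) ≠ 0 := by
  rw [h.distMatrix_sub_mul_distMatrix_sub hd]
  intro h0
  obtain ⟨hx, hy, -⟩ := (smul_of_one_add_smul_adjMatrix_add_smul_one_eq_zero_iff hbot htop).mp h0
  exact hab.elim (· hx) (· hy)

theorem IsSRGWith.distMatrix_sub_mul_distMatrix_sub_mul_distMatrix_sub_eq_zero [DecidableEq V]
    (h : G.IsSRGWith (Fintype.card V) k 0 1) (hd : G.ediam ≤ 2) {a b : ℝ} (hsum : a + b = -3)
    (hprod : a * b = 3 - k) :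
    (distMatrix G - (2 * Fintype.card V - 2 - k : ℝ) • 1) *
      ((distMatrix G - a • 1) * (distMatrix G - b • 1)) = 0 := by
  have hJ : (distMatrix G - a • 1) * (distMatrix G - b • 1) =
      (4 * Fintype.card V - 4 * k - 1 : ℝ) • of 1 := by
    rw [h.distMatrix_sub_mul_distMatrix_sub hd, add_assoc 3, hsum, hprod]
    module
  rw [hJ, Matrix.mul_smul, sub_mul, h.regular.distMatrix_mul_of_one hd, Matrix.smul_mul,
    Matrix.one_mul, sub_self, smul_zero]

theorem IsSRGWith.spectrum_distMatrix [DecidableEq V] [Nonempty V]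
    (h : G.IsSRGWith (Fintype.card V) k 0 1) (hk : 1 ≤ k) (htop : G ≠ ⊤) :
    spectrum ℝ (distMatrix G) =
      {2 * Fintype.card V - 2 - (k : ℝ), (-3 - √(4 * k - 3)) / 2, (-3 + √(4 * k - 3)) / 2} := by
  obtain ⟨h₁₂, h₂₀⟩ := neg_three_sub_sqrt_lt_neg_three_add_sqrt_lt hk h.regular.lt_card
  have hk' : (1 : ℝ) ≤ k := by exact_mod_cast hk
  have hkn : (k : ℝ) + 1 ≤ Fintype.card V := by exact_mod_cast h.regular.lt_card
  set μ₀ : ℝ := 2 * Fintype.card V - 2 - k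
  set μ₁ : ℝ := (-3 - √(4 * k - 3)) / 2
  set μ₂ : ℝ := (-3 + √(4 * k - 3)) / 2
  have hsum : μ₁ + μ₂ = -3 := by ring
  have hprod : μ₁ * μ₂ = 3 - k := by
    have := Real.sq_sqrt (show (0 : ℝ) ≤ 4 * k - 3 by linarith)
    linear_combination (-1 / 4 : ℝ) * this
  have hbot := h.regular.ne_bot (by omega)
  obtain ⟨v, w, hvw⟩ := ne_bot_iff_exists_adj.mp hbot
  have : Nontrivial V := ⟨v, w, hvw.ne⟩
  have hd : G.ediam ≤ 2 := (h.ediam_eq_two htop one_ne_zero).le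
  have haeval (a : ℝ) : aeval (distMatrix G) (X - C a) = distMatrix G - a • 1 := by
    simp [Algebra.algebraMap_eq_smul_one]
  rw [show ({μ₀, μ₁, μ₂} : Set ℝ) = ↑({μ₀, μ₁, μ₂} : Finset ℝ) by simp]
  apply spectrum_eq_of_aeval_prod_eq_zero
  · rw [Finset.prod_insert (by simp; constructor <;> linarith), Finset.prod_pair h₁₂.ne,
      map_mul, map_mul, haeval, haeval, haeval]
    exact h.distMatrix_sub_mul_distMatrix_sub_mul_distMatrix_sub_eq_zero hd hsum hprod
  · simp only [Finset.mem_insert, Finset.mem_singleton]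
    rintro μ (rfl | rfl | rfl)
    · rw [Finset.erase_insert (by simp; constructor <;> linarith), Finset.prod_pair h₁₂.ne,
        map_mul, haeval, haeval]
      exact h.distMatrix_sub_mul_distMatrix_sub_ne_zero hbot htop hd (.inl (by linarith))
    · rw [Finset.erase_insert_of_ne (by linarith), Finset.erase_insert (by simpa using h₁₂.ne),
        Finset.prod_pair (by linarith), map_mul, haeval, haeval]
      exact h.distMatrix_sub_mul_distMatrix_sub_ne_zero hbot htop hd (.inr (by linarith))
    · rw [Finset.erase_insert_of_ne (by linarith), Finset.erase_insert_of_ne h₁₂.ne,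
        Finset.erase_singleton, Finset.insert_empty, Finset.prod_pair (by linarith), map_mul,
        haeval, haeval]
      exact h.distMatrix_sub_mul_distMatrix_sub_ne_zero hbot htop hd (.inr (by linarith))

end SimpleGraph

/-- A `k`-regular graph of girth `5` and diameter `2` (`k ≥ 3`) has exactly `3` distinct
distance eigenvalues. -/
theorem moore_girth_five_three_distinct_distance_eigenvalues {V : Type*} [Fintype V]
    [DecidableEq V] (G : SimpleGraph V) [DecidableRel G.Adj] (k : ℕ) (hk : 3 ≤ k)
    (hreg : G.IsRegularOfDegree k) (hgirth : G.girth = 5) (hdiam : G.diam = 2) :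
    (spectrum ℝ (distMatrix G)).ncard = 3 := by
  have : Nontrivial V := G.nontrivial_of_diam_ne_zero (by omega)
  have hegirth : G.egirth = 5 := (ENat.toNat_eq_iff (by norm_num)).mp hgirth
  have hediam : G.ediam = 2 := (ENat.toNat_eq_iff (by norm_num)).mp hdiam
  have htop : G ≠ ⊤ := fun h ↦ by simp [h, SimpleGraph.diam_top] at hdiam
  have hsrg := hreg.isSRGWith_of_five_le_egirth_of_ediam_le_two hegirth.ge hediam.le
  obtain ⟨h₁₂, h₂₀⟩ := neg_three_sub_sqrt_lt_neg_three_add_sqrt_lt (by omega) hreg.lt_card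
  rw [hsrg.spectrum_distMatrix (by omega) htop, Set.ncard_eq_three]
  exact ⟨_, _, _, by linarith, by linarith, by linarith, rfl⟩
end

section
/- The distance spectral radius of the subdivision of the complete graph K_{k+1} equals k^2 + √(k(k^2+1)(2k+1)/2). -/
open Matrix Finset Sum
set_option maxHeartbeats 1000000

/-- The subdivision graph of `G`: insert a new vertex on each edge of `G`. -/
def subdivision {V : Type*} (G : SimpleGraph V) : SimpleGraph (V ⊕ G.edgeSet) :=
  SimpleGraph.fromRel fun a b =>
    ∃ (v : V) (e : G.edgeSet), a = Sum.inl v ∧ b = Sum.inr e ∧ v ∈ (e : Sym2 V)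


lemma mem_spectrum_iff_exists {n : Type*} [Fintype n] [DecidableEq n] (M : Matrix n n ℝ) (μ : ℝ) :
    μ ∈ spectrum ℝ M ↔ ∃ x, x ≠ 0 ∧ M.mulVec x = μ • x := by
  rw [spectrum.mem_iff]
  have h1 : ¬ IsUnit (algebraMap ℝ (Matrix n n ℝ) μ - M) ↔
      (algebraMap ℝ (Matrix n n ℝ) μ - M).det = 0 := by
    rw [Matrix.isUnit_iff_isUnit_det, isUnit_iff_ne_zero, not_not]
  rw [h1, ← Matrix.exists_mulVec_eq_zero_iff]
  constructor
  · rintro ⟨x, hx, h⟩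
    refine ⟨x, hx, ?_⟩
    rw [Matrix.sub_mulVec, Algebra.algebraMap_eq_smul_one, Matrix.smul_mulVec,
      Matrix.one_mulVec, sub_eq_zero] at h
    exact h.symm
  · rintro ⟨x, hx, h⟩
    refine ⟨x, hx, ?_⟩
    rw [Matrix.sub_mulVec, Algebra.algebraMap_eq_smul_one, Matrix.smul_mulVec,
      Matrix.one_mulVec, sub_eq_zero, h]

lemma perron_isGreatest {n : Type*} [Fintype n] [DecidableEq n] [Nonempty n]
    (M : Matrix n n ℝ) (hM : ∀ i j, 0 ≤ M i j) {v : n → ℝ} (hv : ∀ i, 0 < v i) {lam : ℝ}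
    (hev : M.mulVec v = lam • v) :
    IsGreatest (spectrum ℝ M) lam := by
  constructor
  · refine (mem_spectrum_iff_exists M lam).2 ⟨v, ?_, hev⟩
    intro h
    exact (hv (Classical.arbitrary n)).ne' (congrFun h _)
  · rintro μ hμ
    obtain ⟨x, hx, hxe⟩ := (mem_spectrum_iff_exists M μ).1 hμ
    obtain ⟨i0, -, hi0⟩ := Finset.exists_max_image Finset.univ (fun i => |x i| / v i)
      ⟨Classical.arbitrary n, mem_univ _⟩
    set r := |x i0| / v i0 with hr
    have key : ∀ j, |x j| ≤ r * v j := by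
      intro j
      have := hi0 j (mem_univ _)
      rw [div_le_iff₀ (hv j)] at this
      linarith [this]
    have hrpos : 0 < r := by
      obtain ⟨j, hj⟩ := Function.ne_iff.1 hx
      have h1 : 0 < |x j| / v j := div_pos (abs_pos.2 hj) (hv j)
      exact lt_of_lt_of_le h1 (hi0 j (mem_univ _))
    have hxi0 : |x i0| = r * v i0 := by
      rw [hr, div_mul_cancel₀ _ (hv i0).ne']
    have h1 : |μ| * (r * v i0) ≤ lam * (r * v i0) := by
      have e1 : μ * x i0 = (M.mulVec x) i0 := by rw [hxe]; simp [Pi.smul_apply]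
      calc |μ| * (r * v i0) = |μ * x i0| := by rw [abs_mul, hxi0]
        _ = |∑ j, M i0 j * x j| := by rw [e1]; rfl
        _ ≤ ∑ j, |M i0 j * x j| := Finset.abs_sum_le_sum_abs _ _
        _ ≤ ∑ j, M i0 j * (r * v j) := by
            refine Finset.sum_le_sum fun j _ => ?_
            rw [abs_mul, abs_of_nonneg (hM i0 j)]
            exact mul_le_mul_of_nonneg_left (key j) (hM i0 j)
        _ = r * ∑ j, M i0 j * v j := by rw [Finset.mul_sum]; exact Finset.sum_congr rfl (by intros; ring)
        _ = r * ((M.mulVec v) i0) := rfl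
        _ = r * (lam * v i0) := by rw [hev]; simp [Pi.smul_apply]
        _ = lam * (r * v i0) := by ring
    have h2 : |μ| ≤ lam := le_of_mul_le_mul_right h1 (mul_pos hrpos (hv i0))
    exact (le_abs_self μ).trans h2

section Generic
variable {V : Type*} {G : SimpleGraph V}

lemma subdiv_adj_inl_inr (v : V) (e : G.edgeSet) :
    (subdivision G).Adj (inl v) (inr e) ↔ v ∈ (e : Sym2 V) := by
  simp [subdivision, SimpleGraph.fromRel_adj]

lemma subdiv_adj_inr_inl (v : V) (e : G.edgeSet) :
    (subdivision G).Adj (inr e) (inl v) ↔ v ∈ (e : Sym2 V) := by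
  rw [SimpleGraph.adj_comm]; exact subdiv_adj_inl_inr v e

lemma subdiv_not_adj_inl_inl (u v : V) : ¬ (subdivision G).Adj (inl u) (inl v) := by
  simp [subdivision, SimpleGraph.fromRel_adj]

lemma subdiv_not_adj_inr_inr (e f : G.edgeSet) : ¬ (subdivision G).Adj (inr e) (inr f) := by
  simp [subdivision, SimpleGraph.fromRel_adj]

lemma subdiv_adj_sides {a b : V ⊕ G.edgeSet} (h : (subdivision G).Adj a b) :
    a.isLeft = !b.isLeft := by
  cases a with
  | inl u => cases b with
    | inl v => exact absurd h (subdiv_not_adj_inl_inl u v)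
    | inr e => rfl
  | inr e => cases b with
    | inl v => rfl
    | inr f => exact absurd h (subdiv_not_adj_inr_inr e f)

lemma subdiv_walk_parity {a b : V ⊕ G.edgeSet} (p : (subdivision G).Walk a b) :
    Even p.length ↔ (a.isLeft = b.isLeft) := by
  induction p with
  | nil => simp
  | @cons a c b h p ih =>
    have hs := subdiv_adj_sides h
    rw [SimpleGraph.Walk.length_cons, Nat.even_add_one, ih, hs]
    cases b.isLeft <;> cases c.isLeft <;> simp

lemma walk_length_two_mid {W : Type*} {Γ : SimpleGraph W} {a b : W} (p : Γ.Walk a b)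
    (hp : p.length = 2) : ∃ c, Γ.Adj a c ∧ Γ.Adj c b := by
  cases p with
  | nil => simp at hp
  | cons h1 q =>
    cases q with
    | nil => simp at hp
    | cons h2 r =>
      have hr : r.length = 0 := by simpa using hp
      have := SimpleGraph.Walk.eq_of_length_eq_zero hr
      subst this
      exact ⟨_, h1, h2⟩

lemma walk_length_one_adj {W : Type*} {Γ : SimpleGraph W} {a b : W} (p : Γ.Walk a b)
    (hp : p.length = 1) : Γ.Adj a b := by
  cases p with
  | nil => simp at hp
  | cons h1 q =>
    have hr : q.length = 0 := by simpa using hp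
    have := SimpleGraph.Walk.eq_of_length_eq_zero hr
    subst this
    exact h1

end Generic

section Complete
variable {k : ℕ}

/-- the edge of the complete graph joining two distinct vertices -/
def ked {k : ℕ} {u v : Fin (k+1)} (h : u ≠ v) : (⊤ : SimpleGraph (Fin (k+1))).edgeSet :=
  ⟨s(u,v), by simpa using h⟩

lemma edge_rep (e : (⊤ : SimpleGraph (Fin (k+1))).edgeSet) :
    ∃ a b : Fin (k+1), a ≠ b ∧ (e : Sym2 (Fin (k+1))) = s(a,b) := by
  obtain ⟨⟨a, b⟩, hab⟩ := Quot.exists_rep (e : Sym2 (Fin (k+1)))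
  have h2 := e.2
  have hab' : (e : Sym2 (Fin (k+1))) = s(a,b) := hab.symm
  rw [hab'] at h2
  rw [SimpleGraph.mem_edgeSet] at h2
  exact ⟨a, b, by simpa using h2, hab'⟩

lemma dist_inl_inl {u v : Fin (k+1)} (h : u ≠ v) :
    (subdivision (⊤ : SimpleGraph (Fin (k+1)))).dist (inl u) (inl v) = 2 := by
  have h1 : (subdivision (⊤ : SimpleGraph (Fin (k+1)))).Adj (inl u) (inr (ked h)) :=
    (subdiv_adj_inl_inr _ _).2 (by simp [ked])
  have h2 : (subdivision (⊤ : SimpleGraph (Fin (k+1)))).Adj (inr (ked h)) (inl v) :=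
    (subdiv_adj_inr_inl _ _).2 (by simp [ked])
  have w : (subdivision (⊤ : SimpleGraph (Fin (k+1)))).Walk (inl u) (inl v) :=
    .cons h1 (.cons h2 .nil)
  have hub : (subdivision (⊤ : SimpleGraph (Fin (k+1)))).dist (inl u) (inl v) ≤ 2 := by
    simpa using SimpleGraph.dist_le (SimpleGraph.Walk.cons h1 (SimpleGraph.Walk.cons h2 SimpleGraph.Walk.nil))
  obtain ⟨p, hp⟩ := w.reachable.exists_walk_length_eq_dist
  have hev : Even ((subdivision (⊤ : SimpleGraph (Fin (k+1)))).dist (inl u) (inl v)) :=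
    hp ▸ (subdiv_walk_parity p).2 rfl
  have hne : (subdivision (⊤ : SimpleGraph (Fin (k+1)))).dist (inl u) (inl v) ≠ 0 := by
    intro h0
    have := SimpleGraph.Walk.eq_of_length_eq_zero (hp.trans h0)
    simp at this; exact h this
  obtain ⟨m, hm⟩ := hev
  omega

lemma dist_inl_inr_mem {v : Fin (k+1)} {e : (⊤ : SimpleGraph (Fin (k+1))).edgeSet}
    (h : v ∈ (e : Sym2 (Fin (k+1)))) :
    (subdivision (⊤ : SimpleGraph (Fin (k+1)))).dist (inl v) (inr e) = 1 :=
  SimpleGraph.dist_eq_one_iff_adj.2 ((subdiv_adj_inl_inr _ _).2 h)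

lemma dist_inl_inr_not_mem {v : Fin (k+1)} {e : (⊤ : SimpleGraph (Fin (k+1))).edgeSet}
    (h : v ∉ (e : Sym2 (Fin (k+1)))) :
    (subdivision (⊤ : SimpleGraph (Fin (k+1)))).dist (inl v) (inr e) = 3 := by
  obtain ⟨a, b, hne, he⟩ := edge_rep e
  have hae : a ∈ (e : Sym2 (Fin (k+1))) := by rw [he]; exact Sym2.mem_mk_left a b
  have hva : v ≠ a := fun hv => h (hv ▸ hae)
  have h1 : (subdivision (⊤ : SimpleGraph (Fin (k+1)))).Adj (inl v) (inr (ked hva)) :=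
    (subdiv_adj_inl_inr _ _).2 (by simp [ked])
  have h2 : (subdivision (⊤ : SimpleGraph (Fin (k+1)))).Adj (inr (ked hva)) (inl a) :=
    (subdiv_adj_inr_inl _ _).2 (by simp [ked])
  have h3 : (subdivision (⊤ : SimpleGraph (Fin (k+1)))).Adj (inl a) (inr e) :=
    (subdiv_adj_inl_inr _ _).2 hae
  have w : (subdivision (⊤ : SimpleGraph (Fin (k+1)))).Walk (inl v) (inr e) :=
    .cons h1 (.cons h2 (.cons h3 .nil))
  have hub : (subdivision (⊤ : SimpleGraph (Fin (k+1)))).dist (inl v) (inr e) ≤ 3 := by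
    simpa using SimpleGraph.dist_le (SimpleGraph.Walk.cons h1 (SimpleGraph.Walk.cons h2
      (SimpleGraph.Walk.cons h3 SimpleGraph.Walk.nil)))
  obtain ⟨p, hp⟩ := w.reachable.exists_walk_length_eq_dist
  have hodd : ¬ Even ((subdivision (⊤ : SimpleGraph (Fin (k+1)))).dist (inl v) (inr e)) := by
    rw [← hp, subdiv_walk_parity p]; simp
  have hne1 : (subdivision (⊤ : SimpleGraph (Fin (k+1)))).dist (inl v) (inr e) ≠ 1 := by
    intro h1'
    exact h ((subdiv_adj_inl_inr _ _).1 (walk_length_one_adj p (hp.trans h1')))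
  rcases Nat.even_or_odd ((subdivision (⊤ : SimpleGraph (Fin (k+1)))).dist (inl v) (inr e)) with he' | ho'
  · exact absurd he' hodd
  · obtain ⟨m, hm⟩ := ho'
    omega

lemma dist_inr_inr_share {e f : (⊤ : SimpleGraph (Fin (k+1))).edgeSet} (hef : e ≠ f) {x : Fin (k+1)}
    (hxe : x ∈ (e : Sym2 (Fin (k+1)))) (hxf : x ∈ (f : Sym2 (Fin (k+1)))) :
    (subdivision (⊤ : SimpleGraph (Fin (k+1)))).dist (inr e) (inr f) = 2 := by
  have h1 : (subdivision (⊤ : SimpleGraph (Fin (k+1)))).Adj (inr e) (inl x) :=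
    (subdiv_adj_inr_inl _ _).2 hxe
  have h2 : (subdivision (⊤ : SimpleGraph (Fin (k+1)))).Adj (inl x) (inr f) :=
    (subdiv_adj_inl_inr _ _).2 hxf
  have w : (subdivision (⊤ : SimpleGraph (Fin (k+1)))).Walk (inr e) (inr f) :=
    .cons h1 (.cons h2 .nil)
  have hub : (subdivision (⊤ : SimpleGraph (Fin (k+1)))).dist (inr e) (inr f) ≤ 2 := by
    simpa using SimpleGraph.dist_le (SimpleGraph.Walk.cons h1 (SimpleGraph.Walk.cons h2 SimpleGraph.Walk.nil))
  obtain ⟨p, hp⟩ := w.reachable.exists_walk_length_eq_dist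
  have hev : Even ((subdivision (⊤ : SimpleGraph (Fin (k+1)))).dist (inr e) (inr f)) :=
    hp ▸ (subdiv_walk_parity p).2 rfl
  have hne : (subdivision (⊤ : SimpleGraph (Fin (k+1)))).dist (inr e) (inr f) ≠ 0 := by
    intro h0
    have := SimpleGraph.Walk.eq_of_length_eq_zero (hp.trans h0)
    simp at this; exact hef (Subtype.ext (congrArg Subtype.val this))
  obtain ⟨m, hm⟩ := hev
  omega

lemma dist_inr_inr_disjoint {e f : (⊤ : SimpleGraph (Fin (k+1))).edgeSet}
    (hdisj : ∀ x : Fin (k+1), ¬ (x ∈ (e : Sym2 (Fin (k+1))) ∧ x ∈ (f : Sym2 (Fin (k+1))))) :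
    (subdivision (⊤ : SimpleGraph (Fin (k+1)))).dist (inr e) (inr f) = 4 := by
  obtain ⟨a, b, hab, he⟩ := edge_rep e
  obtain ⟨c, d, hcd, hf⟩ := edge_rep f
  have hae : a ∈ (e : Sym2 (Fin (k+1))) := by rw [he]; exact Sym2.mem_mk_left a b
  have hcf : c ∈ (f : Sym2 (Fin (k+1))) := by rw [hf]; exact Sym2.mem_mk_left c d
  have hac : a ≠ c := fun h => hdisj a ⟨hae, h ▸ hcf⟩
  have h1 : (subdivision (⊤ : SimpleGraph (Fin (k+1)))).Adj (inr e) (inl a) :=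
    (subdiv_adj_inr_inl _ _).2 hae
  have h2 : (subdivision (⊤ : SimpleGraph (Fin (k+1)))).Adj (inl a) (inr (ked hac)) :=
    (subdiv_adj_inl_inr _ _).2 (by simp [ked])
  have h3 : (subdivision (⊤ : SimpleGraph (Fin (k+1)))).Adj (inr (ked hac)) (inl c) :=
    (subdiv_adj_inr_inl _ _).2 (by simp [ked])
  have h4 : (subdivision (⊤ : SimpleGraph (Fin (k+1)))).Adj (inl c) (inr f) :=
    (subdiv_adj_inl_inr _ _).2 hcf
  have w : (subdivision (⊤ : SimpleGraph (Fin (k+1)))).Walk (inr e) (inr f) :=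
    .cons h1 (.cons h2 (.cons h3 (.cons h4 .nil)))
  have hub : (subdivision (⊤ : SimpleGraph (Fin (k+1)))).dist (inr e) (inr f) ≤ 4 := by
    simpa using SimpleGraph.dist_le (SimpleGraph.Walk.cons h1 (SimpleGraph.Walk.cons h2
      (SimpleGraph.Walk.cons h3 (SimpleGraph.Walk.cons h4 SimpleGraph.Walk.nil))))
  obtain ⟨p, hp⟩ := w.reachable.exists_walk_length_eq_dist
  have hev : Even ((subdivision (⊤ : SimpleGraph (Fin (k+1)))).dist (inr e) (inr f)) :=
    hp ▸ (subdiv_walk_parity p).2 rfl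
  have hef : e ≠ f := fun h => hdisj a ⟨hae, h ▸ hae⟩
  have hne0 : (subdivision (⊤ : SimpleGraph (Fin (k+1)))).dist (inr e) (inr f) ≠ 0 := by
    intro h0
    have := SimpleGraph.Walk.eq_of_length_eq_zero (hp.trans h0)
    simp at this; exact hef (Subtype.ext (congrArg Subtype.val this))
  have hne2 : (subdivision (⊤ : SimpleGraph (Fin (k+1)))).dist (inr e) (inr f) ≠ 2 := by
    intro h2'
    obtain ⟨m, hm1, hm2⟩ := walk_length_two_mid p (hp.trans h2')
    cases m with
    | inl x => exact hdisj x ⟨(subdiv_adj_inr_inl _ _).1 hm1, (subdiv_adj_inl_inr _ _).1 hm2⟩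
    | inr g => exact subdiv_not_adj_inr_inr e g hm1
  obtain ⟨m, hm⟩ := hev
  omega

end Complete


lemma card_E : (Fintype.card (⊤ : SimpleGraph (Fin (k+1))).edgeSet : ℝ) = (k+1)*k/2 := by
  classical
  have h1 : Fintype.card (⊤ : SimpleGraph (Fin (k+1))).edgeSet
      = #(⊤ : SimpleGraph (Fin (k+1))).edgeFinset := by
    rw [SimpleGraph.edgeFinset, Set.toFinset_card]
  rw [h1, SimpleGraph.card_edgeFinset_top_eq_card_choose_two, Fintype.card_fin,
    Nat.cast_choose_two]
  push_cast
  ring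

lemma card_filter_mem (u : Fin (k+1)) :
    #(univ.filter fun e : (⊤ : SimpleGraph (Fin (k+1))).edgeSet => u ∈ (e : Sym2 (Fin (k+1)))) = k := by
  classical
  rw [← Fintype.card_subtype]
  have e1 : {e : (⊤ : SimpleGraph (Fin (k+1))).edgeSet // u ∈ (e : Sym2 (Fin (k+1)))}
      ≃ ((⊤ : SimpleGraph (Fin (k+1))).incidenceSet u) :=
    (Equiv.subtypeSubtypeEquivSubtypeInter
      (fun x : Sym2 (Fin (k+1)) => x ∈ (⊤ : SimpleGraph (Fin (k+1))).edgeSet)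
      (fun x => u ∈ x)).trans
      (Equiv.subtypeEquivRight (fun x => Iff.rfl))
  rw [Fintype.card_congr e1, SimpleGraph.card_incidenceSet_eq_degree,
    SimpleGraph.complete_graph_degree, Fintype.card_fin]
  omega

lemma sum_ite_edge {k : ℕ} (x : Fin (k+1)) :
    ∑ f : (⊤ : SimpleGraph (Fin (k+1))).edgeSet,
      (if x ∈ (f : Sym2 (Fin (k+1))) then (2:ℝ) else 0) = 2 * k := by
  classical
  rw [← Finset.sum_filter, Finset.sum_const, card_filter_mem x]
  simp [mul_comm]

lemma card_filter_vert (e : (⊤ : SimpleGraph (Fin (k+1))).edgeSet) {a b : Fin (k+1)}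
    (hab : a ≠ b) (he : (e : Sym2 (Fin (k+1))) = s(a,b)) :
    #(univ.filter fun u : Fin (k+1) => u ∈ (e : Sym2 (Fin (k+1)))) = 2 := by
  classical
  have : (univ.filter fun u : Fin (k+1) => u ∈ (e : Sym2 (Fin (k+1)))) = {a, b} := by
    ext u
    simp [he, Sym2.mem_iff]
  rw [this, Finset.card_pair hab]

/-- The distance spectral radius of the subdivision of the complete graph `K_{k+1}`
equals `k² + √(k(k²+1)(2k+1)/2)`. -/

theorem distance_spectral_radius_subdivision_complete_graph (k : ℕ) :
    IsGreatest (spectrum ℝ (distMatrix (subdivision (⊤ : SimpleGraph (Fin (k + 1))))))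
      ((k : ℝ) ^ 2 + Real.sqrt ((k : ℝ) * ((k : ℝ) ^ 2 + 1) * (2 * (k : ℝ) + 1) / 2)) := by
  classical
  set c : ℝ := (k : ℝ) with hc
  have hc0 : 0 ≤ c := Nat.cast_nonneg k
  set sq : ℝ := Real.sqrt (c * (c ^ 2 + 1) * (2 * c + 1) / 2) with hsq
  have hs2 : sq ^ 2 = c * (c ^ 2 + 1) * (2 * c + 1) / 2 := Real.sq_sqrt (by positivity)
  have hsqnn : 0 ≤ sq := Real.sqrt_nonneg _
  set lam : ℝ := c ^ 2 + sq with hlam_def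
  have hlam : lam ^ 2 = 2 * c ^ 2 * lam + c * (c + 1) ^ 2 / 2 := by
    rw [hlam_def]; nlinarith [hs2]
  set t : ℝ := 2 * (lam - 2 * c) / (c * (3 * c - 1)) with ht
  have hkpos : ∀ _ : (⊤ : SimpleGraph (Fin (k+1))).edgeSet, 1 ≤ k := fun e => by
    obtain ⟨a, b, hab, -⟩ := edge_rep e
    have h1 : a.val < k + 1 := a.isLt
    have h2 : b.val < k + 1 := b.isLt
    have h3 : a.val ≠ b.val := fun h => hab (Fin.ext h)
    omega
  have hc1 : 1 ≤ k → 1 ≤ c := fun hk => by rw [hc]; exact_mod_cast hk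
  have htpos : 1 ≤ k → 0 < t := by
    intro hk
    have hc1' : 1 ≤ c := hc1 hk
    have hs_gt : c ^ 2 < sq := by nlinarith [hs2, hsqnn]
    have hnum : 0 < lam - 2 * c := by rw [hlam_def]; nlinarith
    have hden : 0 < c * (3 * c - 1) := by nlinarith
    rw [ht]
    exact div_pos (by linarith) hden
  set v : (Fin (k+1) ⊕ (⊤ : SimpleGraph (Fin (k+1))).edgeSet) → ℝ :=
    Sum.elim (fun _ => 1) (fun _ => t) with hv_def
  apply perron_isGreatest _ (fun i j => Nat.cast_nonneg _)
    (v := v)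
  · intro i
    cases i with
    | inl u => exact one_pos
    | inr e => exact htpos (hkpos e)
  · funext i
    cases i with
    | inl u =>
      show ∑ j, distMatrix (subdivision (⊤ : SimpleGraph (Fin (k+1)))) (inl u) j * v j
          = lam • v (inl u)
      rw [Fintype.sum_sum_type]
      have hA : ∑ w : Fin (k+1),
          distMatrix (subdivision (⊤ : SimpleGraph (Fin (k+1)))) (inl u) (inl w) * v (inl w)
          = 2 * (c + 1) - 2 := by
        have hpt : ∀ w : Fin (k+1),
            distMatrix (subdivision (⊤ : SimpleGraph (Fin (k+1)))) (inl u) (inl w) * v (inl w)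
            = 2 - (if w = u then 2 else 0) := by
          intro w
          simp only [distMatrix, hv_def, Sum.elim_inl, mul_one]
          by_cases hw : w = u
          · subst hw; rw [if_pos rfl, SimpleGraph.dist_self]; norm_num
          · rw [if_neg hw, dist_inl_inl (Ne.symm hw)]; norm_num
        rw [Finset.sum_congr rfl (fun w _ => hpt w), Finset.sum_sub_distrib,
          Finset.sum_const, Finset.sum_ite_eq' Finset.univ u (fun _ => (2:ℝ))]
        simp [hc]
        push_cast
        ring
      have hB : ∑ e : (⊤ : SimpleGraph (Fin (k+1))).edgeSet,
          distMatrix (subdivision (⊤ : SimpleGraph (Fin (k+1)))) (inl u) (inr e) * v (inr e)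
          = (3 * ((c+1)*c/2) - 2 * c) * t := by
        have hpt : ∀ e : (⊤ : SimpleGraph (Fin (k+1))).edgeSet,
            distMatrix (subdivision (⊤ : SimpleGraph (Fin (k+1)))) (inl u) (inr e) * v (inr e)
            = (3 - (if u ∈ (e : Sym2 (Fin (k+1))) then 2 else 0)) * t := by
          intro e
          simp only [distMatrix, hv_def, Sum.elim_inr]
          by_cases hm : u ∈ (e : Sym2 (Fin (k+1)))
          · rw [if_pos hm, dist_inl_inr_mem hm]; norm_num
          · rw [if_neg hm, dist_inl_inr_not_mem hm]; norm_num
        rw [Finset.sum_congr rfl (fun e _ => hpt e), ← Finset.sum_mul]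
        congr 1
        rw [Finset.sum_sub_distrib, Finset.sum_const, ← Finset.sum_filter, Finset.sum_const,
          card_filter_mem u, Finset.card_univ]
        rw [← card_E (k := k)]
        push_cast [hc]
        ring
      rw [hA, hB]
      show 2 * (c + 1) - 2 + (3 * ((c+1)*c/2) - 2*c) * t = lam * 1
      rcases Nat.eq_zero_or_pos k with hk0 | hk1
      · have hcz : c = 0 := by rw [hc, hk0]; norm_num
        have hsqz : sq = 0 := by rw [hsq, hcz]; norm_num
        rw [hcz] at ht ⊢
        rw [hlam_def, hcz, hsqz]
        norm_num
      · have hc1' : 1 ≤ c := hc1 hk1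
        have hden : c * (3 * c - 1) ≠ 0 := by nlinarith
        rw [ht, show (3*((c+1)*c/2) - 2*c) * (2*(lam-2*c)/(c*(3*c-1)))
          = (lam-2*c) * (c*(3*c-1) / (c*(3*c-1))) by ring, div_self hden]
        ring
    | inr e =>
      have hk1 : 1 ≤ k := hkpos e
      have hc1' : 1 ≤ c := hc1 hk1
      obtain ⟨a, b, hab, he⟩ := edge_rep e
      have hae : a ∈ (e : Sym2 (Fin (k+1))) := by rw [he]; exact Sym2.mem_mk_left a b
      have hbe : b ∈ (e : Sym2 (Fin (k+1))) := by rw [he]; exact Sym2.mem_mk_right a b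
      show ∑ j, distMatrix (subdivision (⊤ : SimpleGraph (Fin (k+1)))) (inr e) j * v j
          = lam • v (inr e)
      rw [Fintype.sum_sum_type]
      have hC : ∑ w : Fin (k+1),
          distMatrix (subdivision (⊤ : SimpleGraph (Fin (k+1)))) (inr e) (inl w) * v (inl w)
          = 3 * (c + 1) - 4 := by
        have hpt : ∀ w : Fin (k+1),
            distMatrix (subdivision (⊤ : SimpleGraph (Fin (k+1)))) (inr e) (inl w) * v (inl w)
            = 3 - (if w ∈ (e : Sym2 (Fin (k+1))) then 2 else 0) := by
          intro w
          simp only [distMatrix, hv_def, Sum.elim_inl, mul_one, SimpleGraph.dist_comm]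
          by_cases hm : w ∈ (e : Sym2 (Fin (k+1)))
          · rw [if_pos hm, dist_inl_inr_mem hm]; norm_num
          · rw [if_neg hm, dist_inl_inr_not_mem hm]; norm_num
        rw [Finset.sum_congr rfl (fun w _ => hpt w), Finset.sum_sub_distrib, Finset.sum_const,
          ← Finset.sum_filter, Finset.sum_const, card_filter_vert e hab he, Finset.card_univ]
        simp [hc]
        push_cast
        ring
      have hD : ∑ f : (⊤ : SimpleGraph (Fin (k+1))).edgeSet,
          distMatrix (subdivision (⊤ : SimpleGraph (Fin (k+1)))) (inr e) (inr f) * v (inr f)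
          = (4 * ((c+1)*c/2) - 4 * c) * t := by
        have hpt : ∀ f : (⊤ : SimpleGraph (Fin (k+1))).edgeSet,
            distMatrix (subdivision (⊤ : SimpleGraph (Fin (k+1)))) (inr e) (inr f) * v (inr f)
            = (4 - (if a ∈ (f : Sym2 (Fin (k+1))) then 2 else 0)
                 - (if b ∈ (f : Sym2 (Fin (k+1))) then 2 else 0)) * t := by
          intro f
          simp only [distMatrix, hv_def, Sum.elim_inr]
          by_cases hf : f = e
          · subst hf
            rw [if_pos hae, if_pos hbe, SimpleGraph.dist_self]
            norm_num
          · have hef : e ≠ f := fun h => hf h.symm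
            by_cases haf : a ∈ (f : Sym2 (Fin (k+1)))
            · by_cases hbf : b ∈ (f : Sym2 (Fin (k+1)))
              · exfalso
                apply hf
                apply Subtype.ext
                rw [(Sym2.mem_and_mem_iff hab).1 ⟨haf, hbf⟩, ← he]
              · rw [if_pos haf, if_neg hbf, dist_inr_inr_share hef hae haf]
                norm_num
            · by_cases hbf : b ∈ (f : Sym2 (Fin (k+1)))
              · rw [if_neg haf, if_pos hbf, dist_inr_inr_share hef hbe hbf]
                norm_num
              · rw [if_neg haf, if_neg hbf, dist_inr_inr_disjoint (fun x hx => ?_)]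
                · norm_num
                · obtain ⟨hx1, hx2⟩ := hx
                  rw [he, Sym2.mem_iff] at hx1
                  rcases hx1 with rfl | rfl
                  · exact haf hx2
                  · exact hbf hx2
        rw [Finset.sum_congr rfl (fun f _ => hpt f), ← Finset.sum_mul]
        congr 1
        rw [Finset.sum_sub_distrib, Finset.sum_sub_distrib, Finset.sum_const,
          sum_ite_edge a, sum_ite_edge b, Finset.card_univ]
        rw [← card_E (k := k)]
        push_cast [hc]
        ring
      rw [hC, hD]
      show 3 * (c + 1) - 4 + (4 * ((c+1)*c/2) - 4*c) * t = lam * t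
      have hden : c * (3 * c - 1) ≠ 0 := by nlinarith
      have key : (3*(c+1) - 4) * (c*(3*c-1)) + (4*((c+1)*c/2) - 4*c) * (2*(lam-2*c))
          = lam * (2*(lam-2*c)) := by linear_combination 2*hlam - 4*hs2
      have htd : t * (c*(3*c-1)) = 2*(lam-2*c) := by
        rw [ht]; exact div_mul_cancel₀ _ hden
      apply mul_right_cancel₀ hden
      calc (3 * (c + 1) - 4 + (4*((c+1)*c/2) - 4*c) * t) * (c*(3*c-1))
          = (3*(c+1) - 4) * (c*(3*c-1)) + (4*((c+1)*c/2) - 4*c) * (t * (c*(3*c-1))) := by ring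
        _ = (3*(c+1) - 4) * (c*(3*c-1)) + (4*((c+1)*c/2) - 4*c) * (2*(lam-2*c)) := by rw [htd]
        _ = lam * (2*(lam-2*c)) := key
        _ = lam * (t * (c*(3*c-1))) := by rw [htd]
        _ = lam * t * (c*(3*c-1)) := by ring
end

section
/- Let G be a minimal (k,6)-cage with adjacency matrix A. Then the distance matrix of G satisfies D = (3/k)A^3 + 2A^2 - ((5k-3)/k)A - 2k·I. -/
open Matrix

namespace CageAux

open SimpleGraph Finset

variable {V : Type*} [Fintype V] [DecidableEq V] (G : SimpleGraph V) [DecidableRel G.Adj]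

lemma six_le_cycle (hg : G.girth = 6) {a : V} (w : G.Walk a a) (hw : w.IsCycle) :
    6 ≤ w.length := by
  have h1 : G.egirth = 6 := by
    rw [girth, ENat.toNat_eq_iff (by norm_num)] at hg
    exact_mod_cast hg
  have := (le_egirth.mp h1.ge) a w hw
  exact_mod_cast this

lemma no_tri (hg : G.girth = 6) {a b c : V} (hab : G.Adj a b) (hbc : G.Adj b c)
    (hca : G.Adj c a) : False := by
  have h := six_le_cycle G hg (Walk.cons hab (Walk.cons hbc (Walk.cons hca Walk.nil))) ?_
  · simp at h
  · simp [Walk.isCycle_def, Walk.isTrail_def, hab.ne, hbc.ne, hca.ne, hab.ne', hbc.ne', hca.ne']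

lemma no_quad (hg : G.girth = 6) {u v x y : V} (huv : u ≠ v) (hxy : x ≠ y)
    (h1 : G.Adj u x) (h2 : G.Adj x v) (h3 : G.Adj v y) (h4 : G.Adj y u) : False := by
  have h := six_le_cycle G hg
    (Walk.cons h1 (Walk.cons h2 (Walk.cons h3 (Walk.cons h4 Walk.nil)))) ?_
  · simp at h
  · simp [Walk.isCycle_def, Walk.isTrail_def, h1.ne, h2.ne, h3.ne, h4.ne, h1.ne', h2.ne',
      h3.ne', h4.ne', huv, hxy, huv.symm, hxy.symm]

lemma no_pent (hg : G.girth = 6) {a b c d e : V} (hac : a ≠ c) (had : a ≠ d) (hbd : b ≠ d)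
    (hbe : b ≠ e) (hce : c ≠ e)
    (h1 : G.Adj a b) (h2 : G.Adj b c) (h3 : G.Adj c d) (h4 : G.Adj d e) (h5 : G.Adj e a) :
    False := by
  have h := six_le_cycle G hg
    (Walk.cons h1 (Walk.cons h2 (Walk.cons h3 (Walk.cons h4 (Walk.cons h5 Walk.nil))))) ?_
  · simp at h
  · simp [Walk.isCycle_def, Walk.isTrail_def, h1.ne, h2.ne, h3.ne, h4.ne, h5.ne, h1.ne', h2.ne',
      h3.ne', h4.ne', h5.ne', hac, had, hbd, hbe, hce, hac.symm, had.symm, hbd.symm, hbe.symm,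
      hce.symm]

lemma common_unique (hg : G.girth = 6) {u v x y : V} (huv : u ≠ v)
    (hux : G.Adj u x) (hxv : G.Adj x v) (huy : G.Adj u y) (hyv : G.Adj y v) : x = y := by
  by_contra h
  exact no_quad G hg huv h hux hxv hyv.symm huy.symm

lemma key_lemma {k : ℕ} (hreg : G.IsRegularOfDegree k) (hg : G.girth = 6)
    (hcard : Fintype.card V = 2 * (k ^ 2 - k + 1)) (hk : 1 ≤ k) (u : V) :
    ∀ w, w ≠ u → ¬G.Adj u w → (¬∃ x, G.Adj u x ∧ G.Adj x w) →
    ∀ a, G.Adj w a → a ≠ u ∧ ¬G.Adj u a ∧ ∃ x, G.Adj u x ∧ G.Adj x a := by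
  classical
  set S1 := G.neighborFinset u with hS1def
  set P2 : V → Prop := fun a => a ≠ u ∧ ¬G.Adj u a ∧ ∃ x, G.Adj u x ∧ G.Adj x a with hP2def
  set S2 := univ.filter P2 with hS2def
  set U := insert u (S1 ∪ S2) with hUdef
  set R := Uᶜ with hRdef
  have hS1card : S1.card = k := hreg u
  have hS2eq : S2 = S1.biUnion (fun x => G.neighborFinset x \ {u}) := by
    ext a
    simp only [hS2def, hS1def, mem_filter, mem_univ, true_and, mem_biUnion, mem_sdiff,
      mem_neighborFinset, mem_singleton, hP2def]
    constructor
    · rintro ⟨hau, _, x, hux, hxa⟩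
      exact ⟨x, hux, hxa, hau⟩
    · rintro ⟨x, hux, hxa, hau⟩
      exact ⟨hau, fun h => no_tri G hg hux hxa h.symm, x, hux, hxa⟩
  have hdisj : ∀ x ∈ S1, ∀ y ∈ S1, x ≠ y →
      Disjoint (G.neighborFinset x \ {u}) (G.neighborFinset y \ {u}) := by
    intro x hx y hy hxy
    have hux : G.Adj u x := by simpa [hS1def] using hx
    have huy : G.Adj u y := by simpa [hS1def] using hy
    rw [Finset.disjoint_left]
    rintro a ha ha'
    rw [mem_sdiff, mem_neighborFinset, mem_singleton] at ha ha'
    exact hxy (common_unique G hg (Ne.symm ha.2) hux ha.1 huy ha'.1)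
  have hcards : ∀ x ∈ S1, (G.neighborFinset x \ {u}).card = k - 1 := by
    intro x hx
    have hux : G.Adj u x := by simpa [hS1def] using hx
    have hu : u ∈ G.neighborFinset x := by simpa using hux.symm
    rw [card_sdiff_of_subset (Finset.singleton_subset_iff.mpr hu), card_singleton,
      card_neighborFinset_eq_degree, hreg x]
  have hS2card : S2.card = k * (k - 1) := by
    rw [hS2eq, card_biUnion hdisj, Finset.sum_congr rfl hcards, sum_const, hS1card, smul_eq_mul]
  have huS1 : u ∉ S1 := by simp [hS1def]
  have huS2 : u ∉ S2 := by simp [hS2def, hP2def]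
  have hS1S2 : Disjoint S1 S2 := by
    rw [Finset.disjoint_left]
    intro a ha ha'
    have h1 : G.Adj u a := by simpa [hS1def] using ha
    have h2 : P2 a := by simpa [hS2def] using ha'
    exact h2.2.1 h1
  have hUcard : U.card = 1 + k + k * (k - 1) := by
    rw [hUdef, card_insert_of_notMem (by simp [huS1, huS2]), card_union_of_disjoint hS1S2,
      hS1card, hS2card]
    omega
  have hRcard : R.card = (k - 1) * (k - 1) := by
    rw [hRdef, card_compl, hUcard, hcard]
    obtain ⟨n, rfl⟩ := Nat.exists_eq_add_of_le hk
    set m := n * n with hm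
    have e1 : 2 * ((1 + n) ^ 2 - (1 + n) + 1) = 2 * m + 2 * n + 2 := by
      have e : (1 + n) ^ 2 = (1 + n) + (n + m) := by rw [hm]; ring
      rw [e, Nat.add_sub_cancel_left]
      ring
    have e2 : (1 + n) * (1 + n - 1) = m + n := by
      simp only [Nat.add_sub_cancel_left, hm]
      ring
    rw [e1, e2]
    simp only [Nat.add_sub_cancel_left]
    omega
  have hNaR : ∀ a ∈ S2, (G.neighborFinset a ∩ R).card = k - 1 := by
    intro a ha
    have hP : P2 a := by simpa [hS2def] using ha
    obtain ⟨hau, hua, x0, hux0, hx0a⟩ := hP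
    have hNaU : G.neighborFinset a ∩ U = {x0} := by
      ext y
      simp only [mem_inter, mem_neighborFinset, mem_singleton, hUdef, mem_insert, mem_union,
        hS1def, hS2def, mem_filter, mem_univ, true_and, hP2def]
      constructor
      · rintro ⟨hay, hy⟩
        rcases hy with rfl | huy | hy2
        · exact absurd hay.symm hua
        · exact common_unique G hg (Ne.symm hau) huy hay.symm hux0 hx0a
        · obtain ⟨hyu, huy, x', hux', hx'y⟩ := hy2
          by_cases hxx : x0 = x'
          · subst hxx
            exact (no_tri G hg hx0a hay hx'y.symm).elim
          · exact (no_pent G hg (Ne.symm hau) (Ne.symm hyu) (fun h => huy (h ▸ hux0)) hxx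
              (fun h => hua (h ▸ hux')) hux0 hx0a hay hx'y.symm hux'.symm).elim
      · rintro rfl
        exact ⟨hx0a.symm, Or.inr (Or.inl hux0)⟩
    have hsd : G.neighborFinset a ∩ R = G.neighborFinset a \ U := by
      rw [hRdef, Finset.sdiff_eq_inter_compl]
    have hcc := Finset.card_inter_add_card_sdiff (G.neighborFinset a) U
    rw [hNaU, card_singleton] at hcc
    rw [hsd]
    have hdeg : (G.neighborFinset a).card = k := by
      rw [card_neighborFinset_eq_degree, hreg a]
    omega
  have hfilter : ∀ (s : Finset V) (b : V), (G.neighborFinset b ∩ s) = s.filter (G.Adj b) := by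
    intro s b
    ext y
    simp [mem_neighborFinset, and_comm]
  have hDC : ∑ a ∈ S2, (G.neighborFinset a ∩ R).card
      = ∑ w ∈ R, (G.neighborFinset w ∩ S2).card := by
    simp only [hfilter, card_filter]
    rw [Finset.sum_comm]
    refine Finset.sum_congr rfl fun w _ => Finset.sum_congr rfl fun a _ => ?_
    by_cases h : G.Adj a w
    · simp [h, h.symm]
    · have h' : ¬G.Adj w a := fun hh => h hh.symm
      simp [h, h']
  have hsum1 : ∑ a ∈ S2, (G.neighborFinset a ∩ R).card = k * ((k - 1) * (k - 1)) := by
    rw [Finset.sum_congr rfl hNaR, sum_const, hS2card, smul_eq_mul, mul_assoc]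
  have hub : ∀ w ∈ R, (G.neighborFinset w ∩ S2).card ≤ k := by
    intro w _
    refine le_trans (card_le_card inter_subset_left) ?_
    rw [card_neighborFinset_eq_degree, hreg w]
  have hall : ∀ w ∈ R, (G.neighborFinset w ∩ S2).card = k := by
    by_contra hc
    push_neg at hc
    obtain ⟨w0, hw0, hne⟩ := hc
    have hlt : ∑ w ∈ R, (G.neighborFinset w ∩ S2).card < ∑ _w ∈ R, k :=
      Finset.sum_lt_sum hub ⟨w0, hw0, lt_of_le_of_ne (hub w0 hw0) hne⟩
    rw [sum_const, smul_eq_mul, hRcard, mul_comm] at hlt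
    rw [hDC] at hsum1
    exact hlt.ne hsum1
  intro w hw1 hw2 hw3 a hwa
  have hwR : w ∈ R := by
    rw [hRdef, mem_compl, hUdef]
    simp only [mem_insert, mem_union, hS1def, mem_neighborFinset, hS2def, mem_filter, mem_univ,
      true_and, hP2def]
    rintro (rfl | huw | ⟨-, -, hx⟩)
    · exact hw1 rfl
    · exact hw2 huw
    · exact hw3 hx
  have hNw : G.neighborFinset w ∩ S2 = G.neighborFinset w := by
    refine eq_of_subset_of_card_le inter_subset_left ?_
    rw [hall w hwR, card_neighborFinset_eq_degree, hreg w]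
  have haw : a ∈ G.neighborFinset w := by simpa using hwa
  rw [← hNw] at haw
  have := (mem_inter.mp haw).2
  simpa [hS2def, hP2def] using this

end CageAux

open SimpleGraph Finset CageAux

/-- For a minimal `(k,6)`-cage (a `k`-regular graph of girth `6` on the Moore number
`2(k²-k+1)` of vertices), the distance matrix is
`D = (3/k)A³ + 2A² - ((5k-3)/k)A - 2k·I`. -/
theorem distMatrix_minimal_six_cage {V : Type*} [Fintype V] [DecidableEq V]
    (G : SimpleGraph V) [DecidableRel G.Adj] (k : ℕ)
    (hreg : G.IsRegularOfDegree k) (hgirth : G.girth = 6)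
    (hcard : Fintype.card V = 2 * (k ^ 2 - k + 1)) :
    distMatrix G = (3 / (k : ℝ)) • (G.adjMatrix ℝ) ^ 3 + 2 • (G.adjMatrix ℝ) ^ 2
      - ((5 * (k : ℝ) - 3) / (k : ℝ)) • G.adjMatrix ℝ - (2 * (k : ℝ)) • 1 := by
  classical
  -- k is positive
  have hk : 1 ≤ k := by
    have hgne : ¬G.IsAcyclic := by
      intro h
      have := h.girth_eq_zero
      omega
    obtain ⟨a, w, hw, -⟩ := (SimpleGraph.exists_girth_eq_length).mpr hgne
    cases w with
    | nil => exact absurd rfl hw.ne_nil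
    | @cons _ b _ h p =>
        have hb : b ∈ G.neighborFinset a := by simpa using h
        have hpos : 0 < (G.neighborFinset a).card := card_pos.mpr ⟨b, hb⟩
        rw [card_neighborFinset_eq_degree, hreg a] at hpos
        omega
  have hk0 : (k : ℝ) ≠ 0 := Nat.cast_ne_zero.mpr (by omega)
  -- entries of A²
  have hsq : ∀ u v : V, ((G.adjMatrix ℝ) ^ 2) u v
      = ((G.neighborFinset u ∩ G.neighborFinset v).card : ℝ) := by
    intro u v
    rw [sq, adjMatrix_mul_apply]
    have h1 : G.neighborFinset u ∩ G.neighborFinset v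
        = (G.neighborFinset u).filter (fun x => G.Adj x v) := by
      ext y
      simp [mem_neighborFinset, G.adj_comm]
    rw [h1]
    simp [adjMatrix_apply, Finset.sum_boole]
  have hcube : ∀ u v : V, ((G.adjMatrix ℝ) ^ 3) u v
      = ∑ a ∈ G.neighborFinset v, ((G.neighborFinset u ∩ G.neighborFinset a).card : ℝ) := by
    intro u v
    rw [pow_succ, mul_adjMatrix_apply]
    exact Finset.sum_congr rfl fun a _ => hsq u a
  -- common-neighbor counts
  have cn_card_one : ∀ u v : V, u ≠ v → (∃ x, G.Adj u x ∧ G.Adj x v) →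
      (G.neighborFinset u ∩ G.neighborFinset v).card = 1 := by
    rintro u v huv ⟨x, hux, hxv⟩
    have h1 : G.neighborFinset u ∩ G.neighborFinset v = {x} := by
      ext y
      simp only [mem_inter, mem_neighborFinset, mem_singleton]
      constructor
      · rintro ⟨h1, h2⟩
        exact common_unique G hgirth huv h1 h2.symm hux hxv
      · rintro rfl
        exact ⟨hux, hxv.symm⟩
    rw [h1, card_singleton]
  have cn_zero_adj : ∀ u v : V, G.Adj u v →
      (G.neighborFinset u ∩ G.neighborFinset v) = ∅ := by
    intro u v huv
    ext y
    simp only [mem_inter, mem_neighborFinset, notMem_empty, iff_false, not_and]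
    intro h1 h2
    exact no_tri G hgirth huv h2 h1.symm
  have cn_zero_none : ∀ u v : V, (¬∃ x, G.Adj u x ∧ G.Adj x v) →
      (G.neighborFinset u ∩ G.neighborFinset v) = ∅ := by
    intro u v h
    ext y
    simp only [mem_inter, mem_neighborFinset, notMem_empty, iff_false, not_and]
    intro h1 h2
    exact h ⟨y, h1, h2.symm⟩
  funext u v
  simp only [distMatrix, Matrix.sub_apply, Matrix.add_apply, Matrix.smul_apply]
  simp only [nsmul_eq_mul, Nat.cast_ofNat, smul_eq_mul]
  rw [hcube u v, hsq u v]
  by_cases h0 : u = v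
  · -- diagonal entries
    subst h0
    have h3 : ∑ a ∈ G.neighborFinset u,
        ((G.neighborFinset u ∩ G.neighborFinset a).card : ℝ) = 0 := by
      refine Finset.sum_eq_zero fun a ha => ?_
      rw [cn_zero_adj u a (by simpa using ha), card_empty, Nat.cast_zero]
    rw [h3, inter_self, card_neighborFinset_eq_degree, hreg u]
    simp [Matrix.one_apply, SimpleGraph.dist_self]
  · have hone : (1 : Matrix V V ℝ) u v = 0 := Matrix.one_apply_ne h0
    by_cases hadj : G.Adj u v
    · -- adjacent vertices
      have hdist : G.dist u v = 1 := SimpleGraph.dist_eq_one_iff_adj.mpr hadj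
      have hmem : u ∈ G.neighborFinset v := by simpa using hadj.symm
      have hsum : ∑ a ∈ G.neighborFinset v,
          ((G.neighborFinset u ∩ G.neighborFinset a).card : ℝ) = (k : ℝ) + ((k : ℝ) - 1) := by
        have h1 : ∀ a ∈ (G.neighborFinset v).erase u,
            ((G.neighborFinset u ∩ G.neighborFinset a).card : ℝ) = 1 := by
          intro a ha
          obtain ⟨hau, hva⟩ := Finset.mem_erase.mp ha
          rw [cn_card_one u a (Ne.symm hau) ⟨v, hadj, by simpa using hva⟩]
          norm_num
        have herase : ∑ a ∈ (G.neighborFinset v).erase u,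
            ((G.neighborFinset u ∩ G.neighborFinset a).card : ℝ) = (k : ℝ) - 1 := by
          rw [Finset.sum_congr rfl h1, Finset.sum_const, Finset.card_erase_of_mem hmem,
            card_neighborFinset_eq_degree, hreg v, nsmul_eq_mul, mul_one]
          push_cast [Nat.cast_sub hk]
          ring
        rw [← Finset.sum_erase_add _ _ hmem, herase, inter_self,
          card_neighborFinset_eq_degree, hreg u]
        ring
      rw [hsum, cn_zero_adj u v hadj, hone, hdist]
      simp [hadj]
      field_simp
      ring
    · by_cases hcom : ∃ x, G.Adj u x ∧ G.Adj x v
      · -- distance-2 vertices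
        obtain ⟨x, hux, hxv⟩ := hcom
        have hdist : G.dist u v = 2 := by
          have hle : G.dist u v ≤ 2 := by
            simpa using SimpleGraph.dist_le (Walk.cons hux (Walk.cons hxv Walk.nil))
          have hne0 : G.dist u v ≠ 0 := by
            rw [Ne, SimpleGraph.dist_eq_zero_iff_eq_or_not_reachable]
            push_neg
            exact ⟨h0, ⟨Walk.cons hux (Walk.cons hxv Walk.nil)⟩⟩
          have hne1 : G.dist u v ≠ 1 := fun h => hadj (SimpleGraph.dist_eq_one_iff_adj.mp h)
          omega
        have hsum : ∑ a ∈ G.neighborFinset v,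
            ((G.neighborFinset u ∩ G.neighborFinset a).card : ℝ) = 0 := by
          refine Finset.sum_eq_zero fun a ha => ?_
          have hva : G.Adj v a := by simpa using ha
          by_cases hua : G.Adj u a
          · rw [cn_zero_adj u a hua, card_empty, Nat.cast_zero]
          · by_cases hcom' : ∃ x', G.Adj u x' ∧ G.Adj x' a
            · obtain ⟨x', hux', hx'a⟩ := hcom'
              have hau : a ≠ u := fun h => hadj (h ▸ hva).symm
              by_cases hxx : x = x'
              · subst hxx
                exact (no_tri G hgirth hxv hva hx'a.symm).elim
              · refine (no_pent G hgirth h0 (Ne.symm hau) ?_ hxx ?_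
                  hux hxv hva hx'a.symm hux'.symm).elim
                · intro h
                  exact hua (h ▸ hux)
                · intro h
                  apply hadj
                  rw [h]
                  exact hux'
            · rw [cn_zero_none u a hcom', card_empty, Nat.cast_zero]
        rw [hsum, cn_card_one u v h0 ⟨x, hux, hxv⟩, hone, hdist]
        simp [hadj]
      · -- distance-3 vertices
        have hkey := key_lemma G hreg hgirth hcard hk u v (Ne.symm h0) hadj hcom
        have hNv : (G.neighborFinset v).Nonempty := by
          rw [← Finset.card_pos, card_neighborFinset_eq_degree, hreg v]
          omega
        obtain ⟨a0, ha0⟩ := hNv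
        have hva0 : G.Adj v a0 := by simpa using ha0
        obtain ⟨ha0u, hnua0, x0, hux0, hx0a0⟩ := hkey a0 hva0
        have hdist : G.dist u v = 3 := by
          have hle : G.dist u v ≤ 3 := by
            simpa using SimpleGraph.dist_le
              (Walk.cons hux0 (Walk.cons hx0a0 (Walk.cons hva0.symm Walk.nil)))
          have hne0 : G.dist u v ≠ 0 := by
            rw [Ne, SimpleGraph.dist_eq_zero_iff_eq_or_not_reachable]
            push_neg
            exact ⟨h0, ⟨Walk.cons hux0 (Walk.cons hx0a0 (Walk.cons hva0.symm Walk.nil))⟩⟩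
          have hne1 : G.dist u v ≠ 1 := fun h => hadj (SimpleGraph.dist_eq_one_iff_adj.mp h)
          have hne2 : G.dist u v ≠ 2 := by
            intro h2
            have hreach : G.Reachable u v :=
              ⟨Walk.cons hux0 (Walk.cons hx0a0 (Walk.cons hva0.symm Walk.nil))⟩
            obtain ⟨p, hp⟩ := hreach.exists_walk_length_eq_dist
            rw [h2] at hp
            cases p with
            | nil => simp at hp
            | @cons _ b _ hb q =>
                cases q with
                | nil => simp at hp
                | @cons _ c _ hc r =>
                    have hr0 : r.length = 0 := by
                      simp only [Walk.length_cons] at hp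
                      omega
                    have := Walk.eq_of_length_eq_zero hr0
                    subst this
                    exact hcom ⟨b, hb, hc⟩
          omega
        have hsum : ∑ a ∈ G.neighborFinset v,
            ((G.neighborFinset u ∩ G.neighborFinset a).card : ℝ) = (k : ℝ) := by
          have h1 : ∀ a ∈ G.neighborFinset v,
              ((G.neighborFinset u ∩ G.neighborFinset a).card : ℝ) = 1 := by
            intro a ha
            have hva : G.Adj v a := by simpa using ha
            obtain ⟨hau, -, hx⟩ := hkey a hva
            rw [cn_card_one u a (Ne.symm hau) hx]
            norm_num
          rw [Finset.sum_congr rfl h1, Finset.sum_const, card_neighborFinset_eq_degree, hreg v,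
            nsmul_eq_mul, mul_one]
        rw [hsum, cn_zero_none u v hcom, hone, hdist]
        simp [hadj]
        field_simp
end
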